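/- Isolated time derivatives (Corollary 2.2): Let (L,u¹,u²,u³) be a C¹ solution of (P),(U_j) with u⁰ as in the context, and set q := e^{2Ω}δ_{ab}u^au^b/(u⁰)² (note 0 ≤ q < 1 and 1−c²q > 0). Then ∂_tL = Δ', ∂_tu⁰ = Δ'⁰, and ∂_tu^j = ω(3c²−2)u^j + Δ'^j for j=1,2,3, where: Δ' := ω(1+c²)(1−3c²)q/(1−c²q) + (1−c²q)⁻¹[(c²−1)(u^a/u⁰)∂_aL − (1+c²)(∂_au^a)/u⁰ + (1+c²)(u⁰)⁻³e^{2Ω}δ_{ab}u^au^k∂_ku^b]; Δ'⁰ := ω(3c²−1)(e^{2Ω}δ_{ab}u^au^b/u⁰)/(1−c²q) − (c²/(1+c²))((1−q)/(1−c²q))u^a∂_aL + (c²q/(1−c²q))∂_au^a − (1−c²q)⁻¹(e^{2Ω}δ_{ab}u^au^k∂_ku^b)/(u⁰)²; Δ'^j := ωc²(3c²−1)u^j q/(1−c²q) + c²u^j(1−c²q)⁻¹[(∂_au^a)/u⁰ − e^{2Ω}δ_{ab}u^au^k∂_ku^b/(u⁰)³] − (c⁴/(1+c²))u^j((1−q)/(1−c²q))(u^a/u⁰)∂_aL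 − (u^a/u⁰)∂_au^j − (c²/(1+c²))e^{−2Ω}δ^{aj}(∂_aL)/u⁰. -/

import Mathlib

noncomputable section
open MeasureTheory Real Filter Metric

/-- Space = ℝ³ (Euclidean). -/
abbrev Space : Type := EuclideanSpace ℝ (Fin 3)
/-- Spacetime = ℝ × ℝ³, first coordinate is time `t`. -/
abbrev Spacetime : Type := ℝ × Space

/-- spatial coordinate unit vector -/
def e3 (i : Fin 3) : Space := EuclideanSpace.single i (1 : ℝ)

/-- spacetime coordinate directions: `dir4 0` is the time direction. -/
def dir4 : Fin 4 → ℝ × Space := fun μ => Fin.cases ((1 : ℝ), (0 : Space)) (fun i => ((0 : ℝ), e3 i)) μ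

/-- spacetime coordinate partial derivative ∂_μ -/
def pd (μ : Fin 4) (f : Spacetime → ℝ) (p : Spacetime) : ℝ := fderiv ℝ f p (dir4 μ)

/-- ∂_t -/
def pdt (f : Spacetime → ℝ) (p : Spacetime) : ℝ := fderiv ℝ f p ((1 : ℝ), (0 : Space))

/-- spatial partial derivative ∂_i of a spacetime function -/
def pds (i : Fin 3) (f : Spacetime → ℝ) (p : Spacetime) : ℝ := fderiv ℝ f p ((0 : ℝ), e3 i)

/-- spatial partial derivative of a function on space -/
def spd (i : Fin 3) (f : Space → ℝ) (x : Space) : ℝ := fderiv ℝ f x (e3 i)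

/-- multi-index spatial derivative ∂_α, α = (α₁,α₂,α₃) -/
def mpd (α : ℕ × ℕ × ℕ) (f : Space → ℝ) : Space → ℝ :=
  (spd 0)^[α.1] ((spd 1)^[α.2.1] ((spd 2)^[α.2.2] f))

/-- multi-index spatial derivative of a spacetime function -/
def mpdST (α : ℕ × ℕ × ℕ) (f : Spacetime → ℝ) : Spacetime → ℝ :=
  (pds 0)^[α.1] ((pds 1)^[α.2.1] ((pds 2)^[α.2.2] f))

/-- order |α| of a spatial multi-index -/
def mdeg (α : ℕ × ℕ × ℕ) : ℕ := α.1 + α.2.1 + α.2.2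

/-- the finite set of spatial multi-indices of order ≤ N -/
def midxLe (N : ℕ) : Finset (ℕ × ℕ × ℕ) :=
  (Finset.range (N+1) ×ˢ Finset.range (N+1) ×ˢ Finset.range (N+1)).filter (fun α => mdeg α ≤ N)

/-- the finite set of spatial multi-indices of order = N -/
def midxEq (N : ℕ) : Finset (ℕ × ℕ × ℕ) :=
  (Finset.range (N+1) ×ˢ Finset.range (N+1) ×ˢ Finset.range (N+1)).filter (fun α => mdeg α = N)

/-- ‖f‖²_{H^N} = Σ_{|α|≤N} ∫ |∂_α f|² -/
def HNormSq (N : ℕ) (f : Space → ℝ) : ℝ := ∑ α ∈ midxLe N, ∫ x : Space, (mpd α f x)^2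

/-- the Sobolev norm ‖f‖_{H^N} -/
def HNorm (N : ℕ) (f : Space → ℝ) : ℝ := Real.sqrt (HNormSq N f)

/-- membership f ∈ H^N (finiteness of the norm), with classical derivatives -/
def InHN (N : ℕ) (f : Space → ℝ) : Prop := ∀ α ∈ midxLe N, MemLp (mpd α f) 2 volume

/-- the restriction f(t,·) -/
def tslice (f : Spacetime → ℝ) (t : ℝ) : Space → ℝ := fun x => f (t, x)

/-- u⁰ := (1 + e^{2Ω}δ_{ab}u^au^b)^{1/2} -/
def u0 (Ω : ℝ → ℝ) (u : Fin 3 → Spacetime → ℝ) (p : Spacetime) : ℝ :=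
  Real.sqrt (1 + Real.exp (2 * Ω p.1) * ∑ a, (u a p)^2)

/-- the four-velocity (u⁰,u¹,u²,u³) with u⁰ determined by the normalization -/
def Uup (Ω : ℝ → ℝ) (u : Fin 3 → Spacetime → ℝ) : Fin 4 → Spacetime → ℝ :=
  fun μ => Fin.cases (u0 Ω u) u μ

/-- inverse metric (g⁻¹)^{μν}: diag(−1, e^{−2Ω}, e^{−2Ω}, e^{−2Ω}) -/
def ginv (Ω : ℝ → ℝ) (p : Spacetime) (μ ν : Fin 4) : ℝ :=
  if μ = 0 ∧ ν = 0 then -1 else if μ = ν then Real.exp (-(2 * Ω p.1)) else 0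

/-- metric g_{μν} = diag(−1, e^{2Ω}, e^{2Ω}, e^{2Ω}) -/
def gmet (Ω : ℝ → ℝ) (p : Spacetime) (μ ν : Fin 4) : ℝ :=
  if μ = 0 ∧ ν = 0 then -1 else if μ = ν then Real.exp (2 * Ω p.1) else 0

/-- Π^{μν} := u^μ u^ν + (g⁻¹)^{μν} -/
def PiUp (Ω : ℝ → ℝ) (u : Fin 3 → Spacetime → ℝ) (p : Spacetime) (μ ν : Fin 4) : ℝ :=
  Uup Ω u μ p * Uup Ω u ν p + ginv Ω p μ ν

/-- ω := dΩ/dt -/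
def omg (Ω : ℝ → ℝ) (t : ℝ) : ℝ := deriv Ω t

/-- equation (P) at a point -/
def eqnP (Ω : ℝ → ℝ) (c : ℝ) (L : Spacetime → ℝ) (u : Fin 3 → Spacetime → ℝ) (p : Spacetime) :
    Prop :=
  (∑ μ, Uup Ω u μ p * pd μ L p)
      + (1 + c^2) * (∑ a, (Real.exp (2 * Ω p.1) * u a p / u0 Ω u p) * pdt (u a) p)
      + (1 + c^2) * (∑ a, pds a (u a) p)
    = -(omg Ω p.1 * (1 + c^2) * (Real.exp (2 * Ω p.1) * ∑ a, (u a p)^2) / u0 Ω u p)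

/-- equation (U_j) at a point -/
def eqnU (Ω : ℝ → ℝ) (c : ℝ) (L : Spacetime → ℝ) (u : Fin 3 → Spacetime → ℝ) (j : Fin 3)
    (p : Spacetime) : Prop :=
  (∑ μ, Uup Ω u μ p * pd μ (u j) p)
      + (c^2 / (1 + c^2)) * (∑ μ, PiUp Ω u p j.succ μ * pd μ L p)
    = omg Ω p.1 * (3 * c^2 - 2) * u0 Ω u p * u j p

/-- the spacetime slab [1,T) × ℝ³ -/
def slab (T : ℝ) : Set Spacetime := Set.Ico (1 : ℝ) T ×ˢ Set.univ

/-- the modified relativistic Euler system holds pointwise on the slab -/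
def SolutionOn (Ω : ℝ → ℝ) (c : ℝ) (T : ℝ) (L : Spacetime → ℝ)
    (u : Fin 3 → Spacetime → ℝ) : Prop :=
  ∀ p ∈ slab T, eqnP Ω c L u p ∧ ∀ j, eqnU Ω c L u j p

/-- f ∈ C⁰([1,T), H^N) -/
def C0H (N : ℕ) (T : ℝ) (f : Spacetime → ℝ) : Prop :=
  (∀ t ∈ Set.Ico (1 : ℝ) T, InHN N (tslice f t)) ∧
  ∀ t₀ ∈ Set.Ico (1 : ℝ) T, ∀ ε > 0, ∃ δ > 0, ∀ t ∈ Set.Ico (1 : ℝ) T,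
    |t - t₀| < δ → HNorm N (fun x => f (t, x) - f (t₀, x)) < ε

/-- classical solution on [1,T)×ℝ³ with the regularity of the local existence theorem -/
def RegSol (Ω : ℝ → ℝ) (c : ℝ) (N : ℕ) (T : ℝ) (L : Spacetime → ℝ)
    (u : Fin 3 → Spacetime → ℝ) : Prop :=
  (if c^2 = 0 then ContinuousOn L (slab T) else ContDiffOn ℝ 1 L (slab T)) ∧
  (∀ j, ContDiffOn ℝ 1 (u j) (slab T)) ∧
  C0H (if c^2 = 0 then N - 1 else N) T L ∧
  C0H N T (fun p => u0 Ω u p - 1) ∧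
  (∀ j, C0H N T (u j)) ∧
  SolutionOn Ω c T L u

/-- the lower-order velocity norm U_M(t) = e^Ω 𝔇(Ω) (Σ_j ‖u^j‖²_{H^M})^{1/2} -/
def UNorm (Ω 𝔇 : ℝ → ℝ) (M : ℕ) (u : Fin 3 → Spacetime → ℝ) (t : ℝ) : ℝ :=
  Real.exp (Ω t) * 𝔇 (Ω t) * Real.sqrt (∑ j, HNormSq M (tslice (u j) t))

/-- S_{N;velocity} -/
def SvelNorm (Ω : ℝ → ℝ) (N : ℕ) (u : Fin 3 → Spacetime → ℝ) (t : ℝ) : ℝ :=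
  Real.exp (2 * Ω t) * ∑ j, HNorm N (tslice (u j) t)

/-- the solution norm S_N(t), defined casewise in c² -/
def SolNormSp (Ω 𝔇 : ℝ → ℝ) (c : ℝ) (N : ℕ) (Lt : Space → ℝ) (ut : Fin 3 → Space → ℝ)
    (t : ℝ) : ℝ :=
  if c^2 = 0 then HNorm (N-1) Lt + Real.exp (2 * Ω t) * ∑ j, HNorm N (ut j)
  else if c^2 < 1/3 then
    HNorm N Lt + Real.exp (Ω t) * ∑ j, HNorm N (ut j)
      + Real.exp (Ω t) * 𝔇 (Ω t) * Real.sqrt (∑ j, HNormSq (N-1) (ut j))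
  else HNorm N Lt + Real.exp (Ω t) * ∑ j, HNorm N (ut j)

/-- the solution norm S_N(t) of a spacetime solution -/
def SolNorm (Ω 𝔇 : ℝ → ℝ) (c : ℝ) (N : ℕ) (L : Spacetime → ℝ) (u : Fin 3 → Spacetime → ℝ)
    (t : ℝ) : ℝ :=
  SolNormSp Ω 𝔇 c N (tslice L t) (fun j => tslice (u j) t) t

/-- u̇⁰ := (1/u⁰) u_a u̇^a -/
def dotu0 (Ω : ℝ → ℝ) (u : Fin 3 → Spacetime → ℝ) (du : Fin 3 → Spacetime → ℝ)
    (p : Spacetime) : ℝ :=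
  (∑ a, Real.exp (2 * Ω p.1) * u a p * du a p) / u0 Ω u p

/-- the time component J̇⁰ of the energy current, evaluated on a variation (dL, du) -/
def Jdot0 (Ω : ℝ → ℝ) (c : ℝ) (u : Fin 3 → Spacetime → ℝ) (dL : Spacetime → ℝ)
    (du : Fin 3 → Spacetime → ℝ) (p : Spacetime) : ℝ :=
  (c^2 * u0 Ω u p / (1 + c^2)) * (dL p)^2 + 2 * c^2 * dotu0 Ω u du p * dL p
    + (1 + c^2) * u0 Ω u p *
        (-(dotu0 Ω u du p)^2 + Real.exp (2 * Ω p.1) * ∑ a, (du a p)^2)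

/-- E_N²(t) -/
def ENsq (Ω : ℝ → ℝ) (c : ℝ) (N : ℕ) (L : Spacetime → ℝ) (u : Fin 3 → Spacetime → ℝ)
    (t : ℝ) : ℝ :=
  ∑ α ∈ midxLe N, ∫ x : Space, Jdot0 Ω c u (mpdST α L) (fun j => mpdST α (u j)) (t, x)

/-- J̇⁰_{velocity} (case c² = 0) -/
def Jdot0vel (Ω : ℝ → ℝ) (u : Fin 3 → Spacetime → ℝ) (du : Fin 3 → Spacetime → ℝ)
    (p : Spacetime) : ℝ :=
  Real.exp (2 * Ω p.1) * u0 Ω u p *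
    (-(dotu0 Ω u du p)^2 + Real.exp (2 * Ω p.1) * ∑ a, (du a p)^2)

/-- E²_{N;velocity}(t) (case c² = 0) -/
def ENvelSq (Ω : ℝ → ℝ) (N : ℕ) (u : Fin 3 → Spacetime → ℝ) (t : ℝ) : ℝ :=
  ∑ α ∈ midxLe N, ∫ x : Space, Jdot0vel Ω u (fun j => mpdST α (u j)) (t, x)

/-- E²_{M;density}(t) (case c² = 0) -/
def ENdenSq (Ω : ℝ → ℝ) (M : ℕ) (L : Spacetime → ℝ) (u : Fin 3 → Spacetime → ℝ)
    (t : ℝ) : ℝ :=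
  ∑ α ∈ midxLe M, ∫ x : Space, u0 Ω u (t, x) * (mpdST α L (t, x))^2

/-- Hypothesis A1 on the scale factor -/
def HypA1 (Ω : ℝ → ℝ) : Prop :=
  ContDiff ℝ 1 Ω ∧ Ω 1 = 0 ∧ (∀ t ≥ (1:ℝ), 1 ≤ Real.exp (Ω t)) ∧
  MonotoneOn (fun t => Real.exp (Ω t)) (Set.Ici 1) ∧
  Tendsto (fun t => Real.exp (Ω t)) atTop atTop

/-- Hypotheses A2–A3 on the scale factor (casewise in c²) -/
def HypA23 (Ω 𝔇 : ℝ → ℝ) (c : ℝ) : Prop :=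
  (c^2 = 0 → IntegrableOn (fun s => Real.exp (-(2 * Ω s))) (Set.Ici 1)) ∧
  (0 < c^2 ∧ c^2 < 1/3 →
    ContDiff ℝ 1 𝔇 ∧ (∀ x, 0 < 𝔇 x) ∧ MonotoneOn 𝔇 (Set.Ici 1) ∧ Tendsto 𝔇 atTop atTop ∧
    (∃ X : ℝ, ∀ x ≥ X, deriv 𝔇 x / 𝔇 x ≤ 1 - 3 * c^2) ∧
    IntegrableOn (fun x => (𝔇 x)⁻¹) (Set.Ici 1) ∧
    IntegrableOn (fun s => Real.exp (-(Ω s)) * 𝔇 (Ω s)) (Set.Ici 1)) ∧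
  (c^2 = 1/3 → IntegrableOn (fun s => Real.exp (-(Ω s))) (Set.Ici 1))

/-!
At a fixed point the system (P), (U_j) is linear in the time derivatives `∂_t L`, `∂_t u^j`.
Contracting (U_j) with `u_j` gives a second scalar equation in `∂_t L` and `u_a ∂_t u^a`;
eliminating `u_a ∂_t u^a` between it and (P) expresses `(u⁰)² (1 - c² q) · u^α ∂_α L` through
spatial derivatives alone. As `(u⁰)² (1 - c² q) = 1 + (1 - c²) e^{2Ω} |u|² > 0`, this isolates
`∂_t L`; each (U_j) then gives `∂_t u^j`, and the chain rule
`u⁰ ∂_t u⁰ = ω e^{2Ω} |u|² + e^{2Ω} u^a ∂_t u^a` gives `∂_t u⁰`.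
-/

open Finset

lemma hasDerivAt_pdt {f : Spacetime → ℝ} {p : Spacetime} (hf : DifferentiableAt ℝ f p) :
    HasDerivAt (fun t => f (t, p.2)) (pdt f p) p.1 :=
  hf.hasFDerivAt.comp_hasDerivAt_of_eq p.1
    ((hasDerivAt_id p.1).prodMk (hasDerivAt_const p.1 p.2)) rfl

lemma one_add_exp_mul_sum_sq_pos (Ω : ℝ → ℝ) (u : Fin 3 → Spacetime → ℝ) (p : Spacetime) :
    0 < 1 + Real.exp (2 * Ω p.1) * ∑ a, u a p ^ 2 := by
  positivity

lemma u0_sq (Ω : ℝ → ℝ) (u : Fin 3 → Spacetime → ℝ) (p : Spacetime) :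
    u0 Ω u p ^ 2 = 1 + Real.exp (2 * Ω p.1) * ∑ a, u a p ^ 2 :=
  Real.sq_sqrt (one_add_exp_mul_sum_sq_pos Ω u p).le

lemma u0_pos (Ω : ℝ → ℝ) (u : Fin 3 → Spacetime → ℝ) (p : Spacetime) : 0 < u0 Ω u p :=
  Real.sqrt_pos.2 (one_add_exp_mul_sum_sq_pos Ω u p)

lemma pdt_u0 {Ω : ℝ → ℝ} {u : Fin 3 → Spacetime → ℝ} {p : Spacetime}
    (hΩ : DifferentiableAt ℝ Ω p.1) (hu : ∀ a, DifferentiableAt ℝ (u a) p) :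
    pdt (u0 Ω u) p = (omg Ω p.1 * Real.exp (2 * Ω p.1) * ∑ a, u a p ^ 2
        + Real.exp (2 * Ω p.1) * ∑ a, u a p * pdt (u a) p) / u0 Ω u p := by
  have hpos := one_add_exp_mul_sum_sq_pos Ω u p
  have hdiff : DifferentiableAt ℝ (u0 Ω u) p := by
    have : DifferentiableAt ℝ (fun q : Spacetime => Ω q.1) p := hΩ.comp p differentiableAt_fst
    unfold u0
    fun_prop (disch := exact hpos.ne')
  have hderiv := ((((hΩ.hasDerivAt.const_mul 2).exp).mul
    (HasDerivAt.fun_sum fun a _ => (hasDerivAt_pdt (hu a)).pow 2)).const_add 1).sqrt hpos.ne'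
  rw [(hasDerivAt_pdt hdiff).unique hderiv, omg]
  simp only [u0, Pi.mul_apply, Pi.pow_apply, Prod.mk.eta, Nat.cast_ofNat, Nat.add_one_sub_one,
    pow_one, mul_assoc, ← mul_sum]
  field_simp

lemma sum_Uup_mul_pd (Ω : ℝ → ℝ) (u : Fin 3 → Spacetime → ℝ) (f : Spacetime → ℝ)
    (p : Spacetime) :
    ∑ μ, Uup Ω u μ p * pd μ f p = u0 Ω u p * pdt f p + ∑ a, u a p * pds a f p :=
  Fin.sum_univ_succ _

lemma sum_PiUp_succ_mul_pd (Ω : ℝ → ℝ) (u : Fin 3 → Spacetime → ℝ) (f : Spacetime → ℝ)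
    (p : Spacetime) (j : Fin 3) :
    ∑ μ, PiUp Ω u p j.succ μ * pd μ f p
      = u j p * (u0 Ω u p * pdt f p + ∑ a, u a p * pds a f p)
        + Real.exp (-(2 * Ω p.1)) * pds j f p := by
  have hginv μ : ginv Ω p j.succ μ = if j.succ = μ then Real.exp (-(2 * Ω p.1)) else 0 := by
    simp [ginv, Fin.succ_ne_zero]
  simp only [PiUp, add_mul, sum_add_distrib, mul_assoc, ← mul_sum, sum_Uup_mul_pd, hginv,
    ite_mul, zero_mul, sum_ite_eq, mem_univ, if_true]
  rfl

lemma bounds_of_sq_eq_one_add {U x c : ℝ} (hU2 : U ^ 2 = 1 + x) (hx : 0 ≤ x) (hc : c ^ 2 ≤ 1) :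
    (0 ≤ x / U ^ 2 ∧ x / U ^ 2 < 1 ∧ 0 < 1 - c ^ 2 * (x / U ^ 2)) ∧ 0 < U ^ 2 - c ^ 2 * x := by
  have h1 : 0 < 1 + x := by linarith
  have hcx : c ^ 2 * x ≤ x := by nlinarith
  rw [hU2, mul_div_assoc', sub_pos, div_lt_one h1, div_lt_one h1]
  exact ⟨⟨div_nonneg hx h1.le, by linarith, by linarith⟩, by linarith⟩

lemma sum_div_mul_eq {ι : Type*} (s : Finset ι) (f h : ι → ℝ) (x : ℝ) :
    ∑ a ∈ s, f a / x * h a = (∑ a ∈ s, f a * h a) / x := by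
  rw [sum_div]
  exact sum_congr rfl fun _ _ => div_mul_eq_mul_div _ _ _

section PointwiseSystem

/- The system at one point, in any spatial dimension: `v`, `B`, `g` stand for `u^a`, `∂_t u^a`,
`∂_a L`, `Du k a` for `∂_k u^a`, `A` for `∂_t L`, `U` for `u⁰`, `E` for `e^{2Ω}`, `W` for `ω`. -/
variable {ι : Type*} [Fintype ι] {E W c U A q : ℝ} {v B g : ι → ℝ} {Du : ι → ι → ℝ}

lemma sum_mul_momentum {κ X R e : ℝ}
    (hMom : ∀ j, U * B j + ∑ a, v a * Du a j + κ * (v j * X + e * g j) = R * v j) :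
    U * ∑ j, v j * B j + ∑ j, ∑ a, v j * v a * Du a j
        + κ * ((∑ j, v j ^ 2) * X + e * ∑ j, v j * g j) = R * ∑ j, v j ^ 2 :=
  calc _ = ∑ j, v j * (U * B j + ∑ a, v a * Du a j + κ * (v j * X + e * g j)) := by
          simp only [mul_add, mul_sum, sum_mul, ← sum_add_distrib, mul_assoc]
          refine sum_congr rfl fun j _ => ?_
          ring
    _ = ∑ j, v j * (R * v j) := sum_congr rfl fun j _ => by rw [hMom j]
    _ = R * ∑ j, v j ^ 2 := by
          rw [mul_sum]
          exact sum_congr rfl fun j _ => by ring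

lemma material_derivative_eq (hE : E ≠ 0) (hU : U ≠ 0)
    (hP : U * A + ∑ a, v a * g a + (1 + c^2) * ∑ a, E * v a / U * B a
        + (1 + c^2) * ∑ a, Du a a = -(W * (1 + c^2) * (E * ∑ a, v a ^ 2) / U))
    (hMom : ∀ j, U * B j + ∑ a, v a * Du a j
        + c^2 / (1 + c^2) * (v j * (U * A + ∑ a, v a * g a) + E⁻¹ * g j)
      = W * (3 * c^2 - 2) * U * v j) :
    (U^2 - c^2 * (E * ∑ a, v a ^ 2)) * (U * A + ∑ a, v a * g a)
      = c^2 * ∑ a, v a * g a - (1 + c^2) * (W * (3 * c^2 - 1) * (E * ∑ a, v a ^ 2) * U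
          + U^2 * ∑ a, Du a a - E * ∑ a, ∑ k, v a * v k * Du k a) := by
  have hY := sum_mul_momentum hMom
  have hB : ∑ a, E * v a / U * B a = E / U * ∑ a, v a * B a := by
    rw [mul_sum]
    exact sum_congr rfl fun a _ => by ring
  rw [hB] at hP
  have hc : 1 + c^2 ≠ 0 := by positivity
  set S := ∑ a, v a ^ 2
  set G := ∑ a, v a * g a
  set Y := ∑ a, v a * B a
  set T := ∑ a, ∑ k, v a * v k * Du k a
  field_simp at hP hY
  linear_combination U * hP - hY

lemma timeDeriv_L_eq (hU : U ≠ 0) (hU2 : U^2 = 1 + E * ∑ a, v a ^ 2)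
    (hM : U^2 - c^2 * (E * ∑ a, v a ^ 2) ≠ 0) (hq : q = (E * ∑ a, v a ^ 2) / U^2)
    (hkey : (U^2 - c^2 * (E * ∑ a, v a ^ 2)) * (U * A + ∑ a, v a * g a)
      = c^2 * ∑ a, v a * g a - (1 + c^2) * (W * (3 * c^2 - 1) * (E * ∑ a, v a ^ 2) * U
          + U^2 * ∑ a, Du a a - E * ∑ a, ∑ k, v a * v k * Du k a)) :
    A = W * (1 + c^2) * (1 - 3 * c^2) * q / (1 - c^2 * q)
      + (1 - c^2 * q)⁻¹ *
        ((c^2 - 1) * (∑ a, v a / U * g a) - (1 + c^2) * (∑ a, Du a a) / U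
          + (1 + c^2) * U⁻¹ ^ 3 * E * (∑ a, ∑ k, v a * v k * Du k a)) := by
  have hq' : 1 - c^2 * q = (U^2 - c^2 * (E * ∑ a, v a ^ 2)) / U^2 := by
    rw [hq]
    field_simp
  rw [sum_div_mul_eq, hq', hq]
  set S := ∑ a, v a ^ 2
  set G := ∑ a, v a * g a
  set M := U^2 - c^2 * (E * S)
  field_simp
  linear_combination hkey - c^2 * G * hU2

lemma timeDeriv_u0_eq (hE : E ≠ 0) (hU : U ≠ 0) (hU2 : U^2 = 1 + E * ∑ a, v a ^ 2)
    (hM : U^2 - c^2 * (E * ∑ a, v a ^ 2) ≠ 0) (hq : q = (E * ∑ a, v a ^ 2) / U^2)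
    (hkey : (U^2 - c^2 * (E * ∑ a, v a ^ 2)) * (U * A + ∑ a, v a * g a)
      = c^2 * ∑ a, v a * g a - (1 + c^2) * (W * (3 * c^2 - 1) * (E * ∑ a, v a ^ 2) * U
          + U^2 * ∑ a, Du a a - E * ∑ a, ∑ k, v a * v k * Du k a))
    (hMom : ∀ j, U * B j + ∑ a, v a * Du a j
        + c^2 / (1 + c^2) * (v j * (U * A + ∑ a, v a * g a) + E⁻¹ * g j)
      = W * (3 * c^2 - 2) * U * v j) :
    (W * E * ∑ a, v a ^ 2 + E * ∑ a, v a * B a) / U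
      = W * (3 * c^2 - 1) * ((E * ∑ a, v a ^ 2) / U) / (1 - c^2 * q)
        - (c^2 / (1 + c^2)) * ((1 - q) / (1 - c^2 * q)) * (∑ a, v a * g a)
        + (c^2 * q / (1 - c^2 * q)) * (∑ a, Du a a)
        - (1 - c^2 * q)⁻¹ * ((E * ∑ a, ∑ k, v a * v k * Du k a) / U^2) := by
  have hY := sum_mul_momentum hMom
  have hc : 1 + c^2 ≠ 0 := by positivity
  have hq' : 1 - c^2 * q = (U^2 - c^2 * (E * ∑ a, v a ^ 2)) / U^2 := by
    rw [hq]
    field_simp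
  rw [hq', hq]
  set S := ∑ a, v a ^ 2
  set G := ∑ a, v a * g a
  set M := U^2 - c^2 * (E * S)
  field_simp at hY ⊢
  apply mul_left_cancel₀ hU
  linear_combination M * hY - c^2 * S * E * hkey + U^2 * c^2 * G * hU2

lemma timeDeriv_u_eq (hE : E ≠ 0) (hU : U ≠ 0) (hU2 : U^2 = 1 + E * ∑ a, v a ^ 2)
    (hM : U^2 - c^2 * (E * ∑ a, v a ^ 2) ≠ 0) (hq : q = (E * ∑ a, v a ^ 2) / U^2)
    (hkey : (U^2 - c^2 * (E * ∑ a, v a ^ 2)) * (U * A + ∑ a, v a * g a)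
      = c^2 * ∑ a, v a * g a - (1 + c^2) * (W * (3 * c^2 - 1) * (E * ∑ a, v a ^ 2) * U
          + U^2 * ∑ a, Du a a - E * ∑ a, ∑ k, v a * v k * Du k a))
    {b : ℝ} (j : ι) (hMom : U * b + ∑ a, v a * Du a j
        + c^2 / (1 + c^2) * (v j * (U * A + ∑ a, v a * g a) + E⁻¹ * g j)
      = W * (3 * c^2 - 2) * U * v j) :
    b = W * (3 * c^2 - 2) * v j
      + (W * c^2 * (3 * c^2 - 1) * v j * q / (1 - c^2 * q)
        + c^2 * v j * (1 - c^2 * q)⁻¹ *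
            ((∑ a, Du a a) / U - E * (∑ a, ∑ k, v a * v k * Du k a) / U^3)
        - (c^4 / (1 + c^2)) * v j * ((1 - q) / (1 - c^2 * q)) * (∑ a, v a / U * g a)
        - (∑ a, v a / U * Du a j)
        - (c^2 / (1 + c^2)) * E⁻¹ * g j / U) := by
  have hc : 1 + c^2 ≠ 0 := by positivity
  have hq' : 1 - c^2 * q = (U^2 - c^2 * (E * ∑ a, v a ^ 2)) / U^2 := by
    rw [hq]
    field_simp
  rw [sum_div_mul_eq, sum_div_mul_eq, hq', hq]
  set S := ∑ a, v a ^ 2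
  set G := ∑ a, v a * g a
  set M := U^2 - c^2 * (E * S)
  field_simp at hMom ⊢
  linear_combination M * hMom - c^2 * v j * E * hkey + c^4 * E * v j * G * hU2

end PointwiseSystem

theorem isolated_time_derivatives_general
    (Ω : ℝ → ℝ) (hΩ : ContDiff ℝ 1 Ω)
    (c : ℝ) (hc1 : c^2 ≤ 1/3)
    (s : Set Spacetime) (hs : IsOpen s)
    (L : Spacetime → ℝ) (u : Fin 3 → Spacetime → ℝ)
    (hu : ∀ j, ContDiffOn ℝ 1 (u j) s)
    (hsol : ∀ p ∈ s, eqnP Ω c L u p ∧ ∀ j, eqnU Ω c L u j p) :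
    ∀ p ∈ s,
      -- the quantity q := e^{2Ω} δ_{ab} u^a u^b / (u⁰)²
      (fun q : ℝ =>
        (0 ≤ q ∧ q < 1 ∧ 0 < 1 - c^2 * q)
        ∧ pdt L p
            = omg Ω p.1 * (1 + c^2) * (1 - 3 * c^2) * q / (1 - c^2 * q)
              + (1 - c^2 * q)⁻¹ *
                ((c^2 - 1) * (∑ a, (u a p / u0 Ω u p) * pds a L p)
                  - (1 + c^2) * (∑ a, pds a (u a) p) / u0 Ω u p
                  + (1 + c^2) * (u0 Ω u p)⁻¹^3 * Real.exp (2 * Ω p.1) *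
                      (∑ a, ∑ k, u a p * u k p * pds k (u a) p))
        ∧ pdt (fun q' => u0 Ω u q') p
            = omg Ω p.1 * (3 * c^2 - 1) *
                ((Real.exp (2 * Ω p.1) * ∑ a, (u a p)^2) / u0 Ω u p) / (1 - c^2 * q)
              - (c^2 / (1 + c^2)) * ((1 - q) / (1 - c^2 * q)) * (∑ a, u a p * pds a L p)
              + (c^2 * q / (1 - c^2 * q)) * (∑ a, pds a (u a) p)
              - (1 - c^2 * q)⁻¹ *
                  ((Real.exp (2 * Ω p.1) * ∑ a, ∑ k, u a p * u k p * pds k (u a) p)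
                    / (u0 Ω u p)^2)
        ∧ ∀ j : Fin 3, pdt (u j) p
            = omg Ω p.1 * (3 * c^2 - 2) * u j p
              + (omg Ω p.1 * c^2 * (3 * c^2 - 1) * u j p * q / (1 - c^2 * q)
                  + c^2 * u j p * (1 - c^2 * q)⁻¹ *
                      ((∑ a, pds a (u a) p) / u0 Ω u p
                        - Real.exp (2 * Ω p.1) *
                            (∑ a, ∑ k, u a p * u k p * pds k (u a) p) / (u0 Ω u p)^3)
                  - (c^4 / (1 + c^2)) * u j p * ((1 - q) / (1 - c^2 * q)) *
                      (∑ a, (u a p / u0 Ω u p) * pds a L p)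
                  - (∑ a, (u a p / u0 Ω u p) * pds a (u j) p)
                  - (c^2 / (1 + c^2)) * Real.exp (-(2 * Ω p.1)) * pds j L p / u0 Ω u p))
      ((Real.exp (2 * Ω p.1) * ∑ a, (u a p)^2) / (u0 Ω u p)^2) := by
  intro p hp
  obtain ⟨hP, hMom⟩ := hsol p hp
  rw [eqnP, sum_Uup_mul_pd] at hP
  simp only [eqnU, sum_Uup_mul_pd, sum_PiUp_succ_mul_pd, Real.exp_neg] at hMom
  have hE : Real.exp (2 * Ω p.1) ≠ 0 := (Real.exp_pos _).ne'
  have hU : u0 Ω u p ≠ 0 := (u0_pos Ω u p).ne'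
  have hU2 := u0_sq Ω u p
  obtain ⟨hq, hM⟩ := bounds_of_sq_eq_one_add (c := c) hU2 (by positivity) (by linarith)
  -- `Du` occurs only as `Du a a` and `Du a j`, which higher-order unification cannot solve.
  have hkey := material_derivative_eq (Du := fun k a => pds k (u a) p) hE hU hP hMom
  refine ⟨hq, timeDeriv_L_eq (Du := fun k a => pds k (u a) p) hU hU2 hM.ne' rfl hkey, ?_,
    fun j => ?_⟩
  · have hud a : DifferentiableAt ℝ (u a) p :=
      ((hu a).contDiffAt (hs.mem_nhds hp)).differentiableAt one_ne_zero
    rw [pdt_u0 (hΩ.differentiable one_ne_zero _) hud]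
    exact timeDeriv_u0_eq (Du := fun k a => pds k (u a) p) hE hU hU2 hM.ne' rfl hkey hMom
  · rw [Real.exp_neg]
    exact timeDeriv_u_eq (Du := fun k a => pds k (u a) p) hE hU hU2 hM.ne' rfl hkey j (hMom j)

/-- Corollary 2.2: isolated time derivatives for solutions of
the modified relativistic Euler system. -/
theorem isolated_time_derivatives
    (Ω : ℝ → ℝ) (hΩ : ContDiff ℝ 1 Ω) (hΩ1 : Ω 1 = 0)
    (c : ℝ) (hc0 : 0 ≤ c^2) (hc1 : c^2 ≤ 1/3)
    (s : Set Spacetime) (hs : IsOpen s) (hs1 : ∀ p ∈ s, 1 ≤ p.1)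
    (L : Spacetime → ℝ) (u : Fin 3 → Spacetime → ℝ)
    (hL : ContDiffOn ℝ 1 L s) (hu : ∀ j, ContDiffOn ℝ 1 (u j) s)
    (hsol : ∀ p ∈ s, eqnP Ω c L u p ∧ ∀ j, eqnU Ω c L u j p) :
    ∀ p ∈ s,
      -- the quantity q := e^{2Ω} δ_{ab} u^a u^b / (u⁰)²
      (fun q : ℝ =>
        (0 ≤ q ∧ q < 1 ∧ 0 < 1 - c^2 * q)
        ∧ pdt L p
            = omg Ω p.1 * (1 + c^2) * (1 - 3 * c^2) * q / (1 - c^2 * q)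
              + (1 - c^2 * q)⁻¹ *
                ((c^2 - 1) * (∑ a, (u a p / u0 Ω u p) * pds a L p)
                  - (1 + c^2) * (∑ a, pds a (u a) p) / u0 Ω u p
                  + (1 + c^2) * (u0 Ω u p)⁻¹^3 * Real.exp (2 * Ω p.1) *
                      (∑ a, ∑ k, u a p * u k p * pds k (u a) p))
        ∧ pdt (fun q' => u0 Ω u q') p
            = omg Ω p.1 * (3 * c^2 - 1) *
                ((Real.exp (2 * Ω p.1) * ∑ a, (u a p)^2) / u0 Ω u p) / (1 - c^2 * q)
              - (c^2 / (1 + c^2)) * ((1 - q) / (1 - c^2 * q)) * (∑ a, u a p * pds a L p)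
              + (c^2 * q / (1 - c^2 * q)) * (∑ a, pds a (u a) p)
              - (1 - c^2 * q)⁻¹ *
                  ((Real.exp (2 * Ω p.1) * ∑ a, ∑ k, u a p * u k p * pds k (u a) p)
                    / (u0 Ω u p)^2)
        ∧ ∀ j : Fin 3, pdt (u j) p
            = omg Ω p.1 * (3 * c^2 - 2) * u j p
              + (omg Ω p.1 * c^2 * (3 * c^2 - 1) * u j p * q / (1 - c^2 * q)
                  + c^2 * u j p * (1 - c^2 * q)⁻¹ *
                      ((∑ a, pds a (u a) p) / u0 Ω u p
                        - Real.exp (2 * Ω p.1) *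
                            (∑ a, ∑ k, u a p * u k p * pds k (u a) p) / (u0 Ω u p)^3)
                  - (c^4 / (1 + c^2)) * u j p * ((1 - q) / (1 - c^2 * q)) *
                      (∑ a, (u a p / u0 Ω u p) * pds a L p)
                  - (∑ a, (u a p / u0 Ω u p) * pds a (u j) p)
                  - (c^2 / (1 + c^2)) * Real.exp (-(2 * Ω p.1)) * pds j L p / u0 Ω u p))
      ((Real.exp (2 * Ω p.1) * ∑ a, (u a p)^2) / (u0 Ω u p)^2) :=
  isolated_time_derivatives_general Ω hΩ c hc1 s hs L u hu hsol
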